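/- arXiv:1603.08948 — 10 statements merged into one kernel-verified Lean document; each statement's English description precedes it below -/
import Mathlib

section
/- Let λ ∈ ℂ with |λ| = 1 and let Ψ^L, Ψ^R : ℤ → ℂ be an eigenvector of the 2-state diagonal quantum walk with one defect with eigenvalue λ, with α = Ψ^L(0), β = Ψ^R(0). Then the measure μ(x) = |Ψ^L(x)|² + |Ψ^R(x)|² satisfies: μ(x) = (1+|b|²)|α|² + |a|²|β|² − 2·Re(conj(a)·b·conj(α)·β) for all x ≥ 1; μ(0) = |α|² + |β|²; and μ(x) = |a|²|α|² + (1+|b|²)|β|² + 2·Re(conj(a)·b·conj(α)·β) for all x ≤ −1. -/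
/-!
On each half-line the walk only multiplies each component by a unimodular phase, while the
eigenvalue is unimodular too, so `‖Ψ^L‖` and `‖Ψ^R‖` are constant on the half-lines where their
recursions run. The values jump only through the defect coin: `Ψ^L(-1)` and `Ψ^R(1)` are
`λ⁻¹` times the two rows of `U₀` applied to `(α, β)`, whose squared norms are computed directly.
-/

open Complex ComplexConjugate

namespace Int

variable {α : Type*} {g : ℤ → α} {m x : ℤ}

theorem apply_eq_of_forall_apply_add_one_eq (h : ∀ x, m ≤ x → g (x + 1) = g x) (hx : m ≤ x) :
    g x = g m := by
  induction x, hx using Int.leInduction with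
  | base => rfl
  | succ n hn ih => rw [h n hn, ih]

theorem apply_eq_of_forall_apply_sub_one_eq (h : ∀ x, x ≤ m → g (x - 1) = g x) (hx : x ≤ m) :
    g x = g m := by
  induction x, hx using Int.leInductionDown with
  | base => rfl
  | pred n hn ih => rw [h n hn, ih]

end Int

theorem norm_eq_norm_of_mul_eq_mul {𝕜 : Type*} [NormedDivisionRing 𝕜] {l k z w : 𝕜}
    (hkl : ‖k‖ = ‖l‖) (hl : l ≠ 0) (h : l * z = k * w) : ‖z‖ = ‖w‖ := by
  have hnorm := congrArg norm h
  rw [norm_mul, norm_mul, hkl] at hnorm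
  exact mul_left_cancel₀ (norm_ne_zero_iff.mpr hl) hnorm

namespace Complex

theorem norm_exp_neg_I_mul_ofReal (x : ℝ) : ‖exp (-(I * x))‖ = 1 := by
  have : -(I * x) = I * ((-x : ℝ) : ℂ) := by push_cast; ring
  rw [this, norm_exp_I_mul_ofReal]

theorem sq_norm_mul_add_mul (a b z w : ℂ) :
    ‖a * z + b * w‖ ^ 2 =
      ‖a‖ ^ 2 * ‖z‖ ^ 2 + ‖b‖ ^ 2 * ‖w‖ ^ 2 + 2 * (conj a * b * conj z * w).re := by
  have hcross : a * z * conj (b * w) = conj (conj a * b * conj z * w) := by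
    simp only [map_mul, conj_conj]; ring
  simp only [Complex.sq_norm, normSq_add, normSq_mul, hcross, conj_re]

theorem sq_norm_unitary_second_row_mul_add_mul {u : ℂ} (hu : ‖u‖ = 1) (a b z w : ℂ) :
    ‖-u * conj b * z + u * conj a * w‖ ^ 2 =
      ‖b‖ ^ 2 * ‖z‖ ^ 2 + ‖a‖ ^ 2 * ‖w‖ ^ 2 - 2 * (conj a * b * conj z * w).re := by
  have hfactor : -u * conj b * z + u * conj a * w = u * (-conj b * z + conj a * w) := by ring
  have hcross : (conj (-conj b) * conj a * conj z * w).re = -(conj a * b * conj z * w).re := by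
    rw [← neg_re]; congr 1; simp only [map_neg, conj_conj]; ring
  rw [hfactor, norm_mul, hu, one_mul, sq_norm_mul_add_mul, hcross, norm_neg, norm_conj,
    norm_conj]
  ring

end Complex

theorem two_state_diagonal_defect_stationary_measure_general
    (σp σm : ℝ) (Δp Δm Δ0 a b c d : ℂ)
    (hΔp : ‖Δp‖ = 1) (hΔm : ‖Δm‖ = 1) (hΔ0 : ‖Δ0‖ = 1)
    (hc : c = -Δ0 * (starRingEnd ℂ) b) (hd : d = Δ0 * (starRingEnd ℂ) a)
    (lam : ℂ) (hlam : ‖lam‖ = 1)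
    (ΨL ΨR : ℤ → ℂ)
    (hL1 : ∀ x : ℤ, 0 ≤ x →
      lam * ΨL x = Complex.exp (Complex.I * (σp : ℂ)) * ΨL (x + 1))
    (hL2 : ∀ x : ℤ, x ≤ -2 →
      lam * ΨL x = Complex.exp (Complex.I * (σm : ℂ)) * ΨL (x + 1))
    (hL3 : lam * ΨL (-1) = a * ΨL 0 + b * ΨR 0)
    (hR1 : ∀ x : ℤ, 2 ≤ x →
      lam * ΨR x = Δp * Complex.exp (-(Complex.I * (σp : ℂ))) * ΨR (x - 1))
    (hR2 : ∀ x : ℤ, x ≤ 0 →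
      lam * ΨR x = Δm * Complex.exp (-(Complex.I * (σm : ℂ))) * ΨR (x - 1))
    (hR3 : lam * ΨR 1 = c * ΨL 0 + d * ΨR 0)
    (α β : ℂ) (hα : α = ΨL 0) (hβ : β = ΨR 0)
    (μ : ℤ → ℝ)
    (hμ : ∀ x : ℤ, μ x = ‖ΨL x‖ ^ 2 + ‖ΨR x‖ ^ 2) :
    (∀ x : ℤ, 1 ≤ x →
      μ x = (1 + ‖b‖ ^ 2) * ‖α‖ ^ 2
              + ‖a‖ ^ 2 * ‖β‖ ^ 2
              - 2 * ((starRingEnd ℂ) a * b * (starRingEnd ℂ) α * β).re) ∧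
    μ 0 = ‖α‖ ^ 2 + ‖β‖ ^ 2 ∧
    (∀ x : ℤ, x ≤ -1 →
      μ x = ‖a‖ ^ 2 * ‖α‖ ^ 2
              + (1 + ‖b‖ ^ 2) * ‖β‖ ^ 2
              + 2 * ((starRingEnd ℂ) a * b * (starRingEnd ℂ) α * β).re) := by
  subst hα hβ hc hd
  have hlam0 : lam ≠ 0 := norm_ne_zero_iff.mp (by rw [hlam]; exact one_ne_zero)
  have step {k z w : ℂ} (hk : ‖k‖ = 1) (h : lam * z = k * w) : ‖z‖ = ‖w‖ :=
    norm_eq_norm_of_mul_eq_mul (hk.trans hlam.symm) hlam0 h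
  have hphase {Δ : ℂ} (hΔ : ‖Δ‖ = 1) (x : ℝ) : ‖Δ * exp (-(I * x))‖ = 1 := by
    rw [norm_mul, hΔ, norm_exp_neg_I_mul_ofReal, one_mul]
  have hL_right : ∀ x, 0 ≤ x → ‖ΨL x‖ = ‖ΨL 0‖ := fun x =>
    Int.apply_eq_of_forall_apply_add_one_eq (g := fun x => ‖ΨL x‖)
      fun n hn => (step (norm_exp_I_mul_ofReal σp) (hL1 n hn)).symm
  have hR_right : ∀ x, 1 ≤ x → ‖ΨR x‖ = ‖ΨR 1‖ := fun x =>
    Int.apply_eq_of_forall_apply_add_one_eq (g := fun x => ‖ΨR x‖)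
      fun n hn => by simpa using step (hphase hΔp σp) (hR1 (n + 1) (by omega))
  have hL_left : ∀ x, x ≤ -1 → ‖ΨL x‖ = ‖ΨL (-1)‖ := fun x =>
    Int.apply_eq_of_forall_apply_sub_one_eq (g := fun x => ‖ΨL x‖)
      fun n hn => by simpa using step (norm_exp_I_mul_ofReal σm) (hL2 (n - 1) (by omega))
  have hR_left : ∀ x, x ≤ 0 → ‖ΨR x‖ = ‖ΨR 0‖ := fun x =>
    Int.apply_eq_of_forall_apply_sub_one_eq (g := fun x => ‖ΨR x‖)
      fun n hn => (step (hphase hΔm σm) (hR2 n hn)).symm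
  have hR_one : ‖ΨR 1‖ = ‖_‖ := step norm_one (hR3.trans (one_mul _).symm)
  have hL_neg_one : ‖ΨL (-1)‖ = ‖_‖ := step norm_one (hL3.trans (one_mul _).symm)
  refine ⟨fun x hx => ?_, hμ 0, fun x hx => ?_⟩
  · rw [hμ x, hL_right x (by omega), hR_right x hx, hR_one,
      Complex.sq_norm_unitary_second_row_mul_add_mul hΔ0]
    ring
  · rw [hμ x, hL_left x hx, hR_left x (by omega), hL_neg_one, Complex.sq_norm_mul_add_mul]
    ring

/-- Theorem 3.1 (stationary measure of the 2-state diagonal QW with one defect):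
for an eigenvector with eigenvalue `lam` (|lam| = 1), the associated measure is
constant on each of the regions `x ≥ 1`, `x = 0`, `x ≤ -1`, with the stated values. -/
theorem two_state_diagonal_defect_stationary_measure
    (σp σm : ℝ) (Δp Δm Δ0 a b c d : ℂ)
    (hΔp : ‖Δp‖ = 1) (hΔm : ‖Δm‖ = 1) (hΔ0 : ‖Δ0‖ = 1)
    (hab : ‖a‖ ^ 2 + ‖b‖ ^ 2 = 1)
    (hc : c = -Δ0 * (starRingEnd ℂ) b) (hd : d = Δ0 * (starRingEnd ℂ) a)
    (lam : ℂ) (hlam : ‖lam‖ = 1)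
    (ΨL ΨR : ℤ → ℂ)
    (hL1 : ∀ x : ℤ, 0 ≤ x →
      lam * ΨL x = Complex.exp (Complex.I * (σp : ℂ)) * ΨL (x + 1))
    (hL2 : ∀ x : ℤ, x ≤ -2 →
      lam * ΨL x = Complex.exp (Complex.I * (σm : ℂ)) * ΨL (x + 1))
    (hL3 : lam * ΨL (-1) = a * ΨL 0 + b * ΨR 0)
    (hR1 : ∀ x : ℤ, 2 ≤ x →
      lam * ΨR x = Δp * Complex.exp (-(Complex.I * (σp : ℂ))) * ΨR (x - 1))
    (hR2 : ∀ x : ℤ, x ≤ 0 →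
      lam * ΨR x = Δm * Complex.exp (-(Complex.I * (σm : ℂ))) * ΨR (x - 1))
    (hR3 : lam * ΨR 1 = c * ΨL 0 + d * ΨR 0)
    (α β : ℂ) (hα : α = ΨL 0) (hβ : β = ΨR 0)
    (μ : ℤ → ℝ)
    (hμ : ∀ x : ℤ, μ x = ‖ΨL x‖ ^ 2 + ‖ΨR x‖ ^ 2) :
    (∀ x : ℤ, 1 ≤ x →
      μ x = (1 + ‖b‖ ^ 2) * ‖α‖ ^ 2
              + ‖a‖ ^ 2 * ‖β‖ ^ 2
              - 2 * ((starRingEnd ℂ) a * b * (starRingEnd ℂ) α * β).re) ∧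
    μ 0 = ‖α‖ ^ 2 + ‖β‖ ^ 2 ∧
    (∀ x : ℤ, x ≤ -1 →
      μ x = ‖a‖ ^ 2 * ‖α‖ ^ 2
              + (1 + ‖b‖ ^ 2) * ‖β‖ ^ 2
              + 2 * ((starRingEnd ℂ) a * b * (starRingEnd ℂ) α * β).re) :=
  two_state_diagonal_defect_stationary_measure_general σp σm Δp Δm Δ0 a b c d hΔp hΔm hΔ0 hc hd lam
    hlam ΨL ΨR hL1 hL2 hL3 hR1 hR2 hR3 α β hα hβ μ hμ
end

section
/- Let λ ∈ ℂ with λ ≠ 0 and let Ψ^L, Ψ^R : ℤ → ℂ be an eigenvector of the 2-state diagonal quantum walk with one defect with eigenvalue λ, with α = Ψ^L(0), β = Ψ^R(0). Then the amplitudes are given explicitly by: for x ≥ 1, Ψ^L(x) = (λ·e^{−iσ₊})^x · α and Ψ^R(x) = λ⁻¹(cα + dβ)·(λ⁻¹Δ⁺e^{−iσ₊})^{x−1}; and for x ≤ −1, Ψ^L(x) = λ⁻¹(aα + bβ)·(λ⁻¹e^{iσ₋})^{−x−1} and Ψ^R(x) = (λ·(Δ⁻)⁻¹·e^{iσ₋})^{−x}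 · β. -/
/-! On each of the four half-lines the eigenvalue equations form a first-order linear
recurrence with constant coefficient, so the amplitudes there are geometric. Two of these
sequences start at the defect with `α = Ψ^L(0)` and `β = Ψ^R(0)`; the other two start at
`Ψ^R(1)` and `Ψ^L(-1)`, which the defect coin gives as `λ⁻¹(cα + dβ)` and `λ⁻¹(aα + bβ)`.
-/
section GeometricRecurrence

variable {G₀ : Type*} [GroupWithZero G₀] {f : ℤ → G₀} {r : G₀} {x₀ x : ℤ}

theorem zpow_add_one_eq_mul_of_nonneg {k : ℤ} (hk : 0 ≤ k) : r ^ (k + 1) = r * r ^ k := by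
  lift k to ℕ using hk
  exact_mod_cast pow_succ' r k

theorem eq_zpow_sub_mul_of_succ_eq_mul (h : ∀ x, x₀ ≤ x → f (x + 1) = r * f x)
    (hx : x₀ ≤ x) : f x = r ^ (x - x₀) * f x₀ := by
  induction x, hx using Int.leInduction with
  | base => rw [sub_self, zpow_zero, one_mul]
  | succ n hn ih =>
    rw [h n hn, ih, ← mul_assoc, add_sub_right_comm,
      zpow_add_one_eq_mul_of_nonneg (sub_nonneg.mpr hn)]

theorem eq_zpow_sub_mul_of_pred_eq_mul (h : ∀ x, x ≤ x₀ → f (x - 1) = r * f x)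
    (hx : x ≤ x₀) : f x = r ^ (x₀ - x) * f x₀ := by
  induction x, hx using Int.leInductionDown with
  | base => rw [sub_self, zpow_zero, one_mul]
  | pred n hn ih =>
    rw [h n hn, ih, ← mul_assoc, sub_sub_eq_add_sub, add_sub_right_comm,
      zpow_add_one_eq_mul_of_nonneg (sub_nonneg.mpr hn)]

end GeometricRecurrence

theorem two_state_diagonal_defect_amplitudes_general
    (σp σm : ℝ) (Δp Δm a b c d : ℂ)
    (hΔm : ‖Δm‖ = 1)
    (lam : ℂ) (hlam : lam ≠ 0)
    (ΨL ΨR : ℤ → ℂ)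
    (hL1 : ∀ x : ℤ, 0 ≤ x →
      lam * ΨL x = Complex.exp (Complex.I * (σp : ℂ)) * ΨL (x + 1))
    (hL2 : ∀ x : ℤ, x ≤ -2 →
      lam * ΨL x = Complex.exp (Complex.I * (σm : ℂ)) * ΨL (x + 1))
    (hL3 : lam * ΨL (-1) = a * ΨL 0 + b * ΨR 0)
    (hR1 : ∀ x : ℤ, 2 ≤ x →
      lam * ΨR x = Δp * Complex.exp (-(Complex.I * (σp : ℂ))) * ΨR (x - 1))
    (hR2 : ∀ x : ℤ, x ≤ 0 →
      lam * ΨR x = Δm * Complex.exp (-(Complex.I * (σm : ℂ))) * ΨR (x - 1))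
    (hR3 : lam * ΨR 1 = c * ΨL 0 + d * ΨR 0)
    (α β : ℂ) (hα : α = ΨL 0) (hβ : β = ΨR 0) :
    (∀ x : ℤ, 1 ≤ x →
      ΨL x = (lam * Complex.exp (-(Complex.I * (σp : ℂ)))) ^ x * α ∧
      ΨR x = lam⁻¹ * (c * α + d * β)
              * (lam⁻¹ * Δp * Complex.exp (-(Complex.I * (σp : ℂ)))) ^ (x - 1)) ∧
    (∀ x : ℤ, x ≤ -1 →
      ΨL x = lam⁻¹ * (a * α + b * β)
              * (lam⁻¹ * Complex.exp (Complex.I * (σm : ℂ))) ^ (-x - 1) ∧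
      ΨR x = (lam * Δm⁻¹ * Complex.exp (Complex.I * (σm : ℂ))) ^ (-x) * β) := by
  subst hα hβ
  have hΔm0 : Δm ≠ 0 := norm_ne_zero_iff.mp (hΔm ▸ one_ne_zero)
  have L_right (x : ℤ) (hx : 0 ≤ x) :
      ΨL (x + 1) = lam * Complex.exp (-(Complex.I * σp)) * ΨL x := by
    rw [Complex.exp_neg]
    field_simp; linear_combination -hL1 x hx
  have R_right (x : ℤ) (hx : 1 ≤ x) :
      ΨR (x + 1) = lam⁻¹ * Δp * Complex.exp (-(Complex.I * σp)) * ΨR x := by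
    have h := hR1 (x + 1) (by omega)
    rw [add_sub_cancel_right] at h
    field_simp; linear_combination h
  have L_left (x : ℤ) (hx : x ≤ -1) :
      ΨL (x - 1) = lam⁻¹ * Complex.exp (Complex.I * σm) * ΨL x := by
    have h := hL2 (x - 1) (by omega)
    rw [sub_add_cancel] at h
    field_simp; linear_combination h
  have R_left (x : ℤ) (hx : x ≤ 0) :
      ΨR (x - 1) = lam * Δm⁻¹ * Complex.exp (Complex.I * σm) * ΨR x := by
    have h := hR2 x hx
    rw [Complex.exp_neg] at h
    field_simp at h ⊢; linear_combination -h
  have ΨR_one : ΨR 1 = lam⁻¹ * (c * ΨL 0 + d * ΨR 0) := by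
    rw [← hR3, inv_mul_cancel_left₀ hlam]
  have ΨL_neg_one : ΨL (-1) = lam⁻¹ * (a * ΨL 0 + b * ΨR 0) := by
    rw [← hL3, inv_mul_cancel_left₀ hlam]
  refine ⟨fun x hx ↦ ⟨?_, ?_⟩, fun x hx ↦ ⟨?_, ?_⟩⟩
  · simpa using eq_zpow_sub_mul_of_succ_eq_mul L_right (by omega : 0 ≤ x)
  · rw [eq_zpow_sub_mul_of_succ_eq_mul R_right hx, ΨR_one, mul_comm]
  · rw [eq_zpow_sub_mul_of_pred_eq_mul L_left hx, ΨL_neg_one, mul_comm, neg_sub_comm]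
  · simpa using eq_zpow_sub_mul_of_pred_eq_mul R_left (by omega : x ≤ 0)

/-- Explicit form of the stationary amplitudes of the 2-state diagonal QW with one defect. -/
theorem two_state_diagonal_defect_amplitudes
    (σp σm : ℝ) (Δp Δm Δ0 a b c d : ℂ)
    (hΔp : ‖Δp‖ = 1) (hΔm : ‖Δm‖ = 1) (hΔ0 : ‖Δ0‖ = 1)
    (hab : ‖a‖ ^ 2 + ‖b‖ ^ 2 = 1)
    (hc : c = -Δ0 * (starRingEnd ℂ) b) (hd : d = Δ0 * (starRingEnd ℂ) a)
    (lam : ℂ) (hlam : lam ≠ 0)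
    (ΨL ΨR : ℤ → ℂ)
    (hL1 : ∀ x : ℤ, 0 ≤ x →
      lam * ΨL x = Complex.exp (Complex.I * (σp : ℂ)) * ΨL (x + 1))
    (hL2 : ∀ x : ℤ, x ≤ -2 →
      lam * ΨL x = Complex.exp (Complex.I * (σm : ℂ)) * ΨL (x + 1))
    (hL3 : lam * ΨL (-1) = a * ΨL 0 + b * ΨR 0)
    (hR1 : ∀ x : ℤ, 2 ≤ x →
      lam * ΨR x = Δp * Complex.exp (-(Complex.I * (σp : ℂ))) * ΨR (x - 1))
    (hR2 : ∀ x : ℤ, x ≤ 0 →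
      lam * ΨR x = Δm * Complex.exp (-(Complex.I * (σm : ℂ))) * ΨR (x - 1))
    (hR3 : lam * ΨR 1 = c * ΨL 0 + d * ΨR 0)
    (α β : ℂ) (hα : α = ΨL 0) (hβ : β = ΨR 0) :
    (∀ x : ℤ, 1 ≤ x →
      ΨL x = (lam * Complex.exp (-(Complex.I * (σp : ℂ)))) ^ x * α ∧
      ΨR x = lam⁻¹ * (c * α + d * β)
              * (lam⁻¹ * Δp * Complex.exp (-(Complex.I * (σp : ℂ)))) ^ (x - 1)) ∧
    (∀ x : ℤ, x ≤ -1 →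
      ΨL x = lam⁻¹ * (a * α + b * β)
              * (lam⁻¹ * Complex.exp (Complex.I * (σm : ℂ))) ^ (-x - 1) ∧
      ΨR x = (lam * Δm⁻¹ * Complex.exp (Complex.I * (σm : ℂ))) ^ (-x) * β) :=
  two_state_diagonal_defect_amplitudes_general σp σm Δp Δm a b c d hΔm lam hlam ΨL ΨR hL1 hL2 hL3
    hR1 hR2 hR3 α β hα hβ
end

section
/- Let λ ∈ ℂ with λ ≠ 0 and let α, β ∈ ℂ be arbitrary. Define Ψ^L, Ψ^R : ℤ → ℂ by Ψ^L(0) = α, Ψ^R(0) = β, and for x ≥ 1: Ψ^L(x) = (λ·e^{−iσ₊})^x · α, Ψ^R(x) = λ⁻¹(cα + dβ)·(λ⁻¹Δ⁺e^{−iσ₊})^{x−1}; for x ≤ −1: Ψ^L(x) = λ⁻¹(aα + bβ)·(λ⁻¹e^{iσ₋})^{−x−1}, Ψ^R(x) = (λ·(Δ⁻)⁻¹·e^{iσ₋})^{−x} · β. Then (Ψ^L, Ψ^R) is an eigenvector of the 2-state diagonal quantum walk with one defect with eigenvalue λ. -/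
/-!
Away from the defect the amplitudes are geometric sequences on half-lines, so each bulk
eigenvalue equation reduces to an identity between the ratio of the sequence and `λ`,
e.g. `e^{iσ₊} · (λ e^{-iσ₊}) = λ`. The two defect equations hold because the first
amplitude past the defect is `λ⁻¹` times the corresponding coin output.
-/

section GeometricHalfLine

variable {G₀ : Type*} [GroupWithZero G₀]

lemma zpow_add_one_of_nonneg (q : G₀) {n : ℤ} (hn : 0 ≤ n) : q ^ (n + 1) = q ^ n * q := by
  rw [zpow_add' (Or.inr (Or.inl (by omega))), zpow_one]

lemma apply_add_one_eq_mul_of_eq_mul_zpow {f : ℤ → G₀} {C q : G₀} {x₀ : ℤ}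
    (hf : ∀ x, x₀ ≤ x → f x = C * q ^ (x - x₀)) {x : ℤ} (hx : x₀ ≤ x) :
    f (x + 1) = f x * q := by
  rw [hf x hx, hf (x + 1) (by omega), mul_assoc, show x + 1 - x₀ = x - x₀ + 1 by ring,
    zpow_add_one_of_nonneg q (by omega)]

lemma apply_sub_one_eq_mul_of_eq_mul_zpow {f : ℤ → G₀} {C q : G₀} {x₀ : ℤ}
    (hf : ∀ x, x ≤ x₀ → f x = C * q ^ (x₀ - x)) {x : ℤ} (hx : x ≤ x₀) :
    f (x - 1) = f x * q := by
  rw [hf x hx, hf (x - 1) (by omega), mul_assoc, show x₀ - (x - 1) = x₀ - x + 1 by ring,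
    zpow_add_one_of_nonneg q (by omega)]

end GeometricHalfLine

theorem two_state_diagonal_defect_amplitudes_are_eigenvector_general
    (σp σm : ℝ) (Δp Δm a b c d : ℂ)
    (hΔm : ‖Δm‖ = 1)
    (lam : ℂ) (hlam : lam ≠ 0)
    (α β : ℂ) (ΨL ΨR : ℤ → ℂ)
    (hΨL0 : ΨL 0 = α) (hΨR0 : ΨR 0 = β)
    (hΨLp : ∀ x : ℤ, 1 ≤ x →
      ΨL x = (lam * Complex.exp (-(Complex.I * (σp : ℂ)))) ^ x * α)
    (hΨRp : ∀ x : ℤ, 1 ≤ x →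
      ΨR x = lam⁻¹ * (c * α + d * β)
              * (lam⁻¹ * Δp * Complex.exp (-(Complex.I * (σp : ℂ)))) ^ (x - 1))
    (hΨLm : ∀ x : ℤ, x ≤ -1 →
      ΨL x = lam⁻¹ * (a * α + b * β)
              * (lam⁻¹ * Complex.exp (Complex.I * (σm : ℂ))) ^ (-x - 1))
    (hΨRm : ∀ x : ℤ, x ≤ -1 →
      ΨR x = (lam * Δm⁻¹ * Complex.exp (Complex.I * (σm : ℂ))) ^ (-x) * β) :
    (∀ x : ℤ, 0 ≤ x →
      lam * ΨL x = Complex.exp (Complex.I * (σp : ℂ)) * ΨL (x + 1)) ∧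
    (∀ x : ℤ, x ≤ -2 →
      lam * ΨL x = Complex.exp (Complex.I * (σm : ℂ)) * ΨL (x + 1)) ∧
    (lam * ΨL (-1) = a * ΨL 0 + b * ΨR 0) ∧
    (∀ x : ℤ, 2 ≤ x →
      lam * ΨR x = Δp * Complex.exp (-(Complex.I * (σp : ℂ))) * ΨR (x - 1)) ∧
    (∀ x : ℤ, x ≤ 0 →
      lam * ΨR x = Δm * Complex.exp (-(Complex.I * (σm : ℂ))) * ΨR (x - 1)) ∧
    (lam * ΨR 1 = c * ΨL 0 + d * ΨR 0) := by
  have hΔm0 : Δm ≠ 0 := norm_ne_zero_iff.mp (by rw [hΔm]; exact one_ne_zero)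
  have hΨL_nonneg : ∀ x, 0 ≤ x → ΨL x = α * (lam * Complex.exp (-(Complex.I * σp))) ^ (x - 0) := by
    intro x hx
    rcases hx.eq_or_lt with rfl | hx
    · simp [hΨL0]
    · rw [hΨLp x hx, sub_zero, mul_comm]
  have hΨL_neg : ∀ x, x ≤ -1 →
      ΨL x = lam⁻¹ * (a * α + b * β) * (lam⁻¹ * Complex.exp (Complex.I * σm)) ^ (-1 - x) := by
    intro x hx
    rw [hΨLm x hx, neg_sub_comm]
  have hΨR_nonpos : ∀ x, x ≤ 0 → ΨR x = β * (lam * Δm⁻¹ * Complex.exp (Complex.I * σm)) ^ (0 - x) := by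
    intro x hx
    rcases hx.eq_or_lt with rfl | hx
    · simp [hΨR0]
    · rw [hΨRm x (by omega), zero_sub, mul_comm]
  refine ⟨fun x hx => ?_, fun x hx => ?_, ?_, fun x hx => ?_, fun x hx => ?_, ?_⟩
  · rw [apply_add_one_eq_mul_of_eq_mul_zpow hΨL_nonneg hx, Complex.exp_neg]
    field_simp
  · have hstep := apply_sub_one_eq_mul_of_eq_mul_zpow hΨL_neg (x := x + 1) (by omega)
    rw [add_sub_cancel_right] at hstep
    rw [hstep, mul_left_comm, mul_inv_cancel_left₀ hlam, mul_comm]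
  · rw [hΨLm (-1) le_rfl, hΨL0, hΨR0, neg_neg, sub_self, zpow_zero, mul_one,
      mul_inv_cancel_left₀ hlam]
  · have hstep := apply_add_one_eq_mul_of_eq_mul_zpow hΨRp (x := x - 1) (by omega)
    rw [sub_add_cancel] at hstep
    rw [hstep, mul_left_comm, mul_assoc lam⁻¹, mul_inv_cancel_left₀ hlam, mul_comm]
  · rw [apply_sub_one_eq_mul_of_eq_mul_zpow hΨR_nonpos hx, Complex.exp_neg]
    field_simp
  · rw [hΨRp 1 le_rfl, hΨL0, hΨR0, sub_self, zpow_zero, mul_one, mul_inv_cancel_left₀ hlam]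

/-- Conversely, the explicit formulas define an eigenvector of the 2-state diagonal QW with one defect. -/
theorem two_state_diagonal_defect_amplitudes_are_eigenvector
    (σp σm : ℝ) (Δp Δm Δ0 a b c d : ℂ)
    (hΔp : ‖Δp‖ = 1) (hΔm : ‖Δm‖ = 1) (hΔ0 : ‖Δ0‖ = 1)
    (hab : ‖a‖ ^ 2 + ‖b‖ ^ 2 = 1)
    (hc : c = -Δ0 * (starRingEnd ℂ) b) (hd : d = Δ0 * (starRingEnd ℂ) a)
    (lam : ℂ) (hlam : lam ≠ 0)
    (α β : ℂ) (ΨL ΨR : ℤ → ℂ)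
    (hΨL0 : ΨL 0 = α) (hΨR0 : ΨR 0 = β)
    (hΨLp : ∀ x : ℤ, 1 ≤ x →
      ΨL x = (lam * Complex.exp (-(Complex.I * (σp : ℂ)))) ^ x * α)
    (hΨRp : ∀ x : ℤ, 1 ≤ x →
      ΨR x = lam⁻¹ * (c * α + d * β)
              * (lam⁻¹ * Δp * Complex.exp (-(Complex.I * (σp : ℂ)))) ^ (x - 1))
    (hΨLm : ∀ x : ℤ, x ≤ -1 →
      ΨL x = lam⁻¹ * (a * α + b * β)
              * (lam⁻¹ * Complex.exp (Complex.I * (σm : ℂ))) ^ (-x - 1))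
    (hΨRm : ∀ x : ℤ, x ≤ -1 →
      ΨR x = (lam * Δm⁻¹ * Complex.exp (Complex.I * (σm : ℂ))) ^ (-x) * β) :
    (∀ x : ℤ, 0 ≤ x →
      lam * ΨL x = Complex.exp (Complex.I * (σp : ℂ)) * ΨL (x + 1)) ∧
    (∀ x : ℤ, x ≤ -2 →
      lam * ΨL x = Complex.exp (Complex.I * (σm : ℂ)) * ΨL (x + 1)) ∧
    (lam * ΨL (-1) = a * ΨL 0 + b * ΨR 0) ∧
    (∀ x : ℤ, 2 ≤ x →
      lam * ΨR x = Δp * Complex.exp (-(Complex.I * (σp : ℂ))) * ΨR (x - 1)) ∧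
    (∀ x : ℤ, x ≤ 0 →
      lam * ΨR x = Δm * Complex.exp (-(Complex.I * (σm : ℂ))) * ΨR (x - 1)) ∧
    (lam * ΨR 1 = c * ΨL 0 + d * ΨR 0) :=
  two_state_diagonal_defect_amplitudes_are_eigenvector_general σp σm Δp Δm a b c d hΔm lam hlam α β
    ΨL ΨR hΨL0 hΨR0 hΨLp hΨRp hΨLm hΨRm
end

section
/- Let λ ∈ ℂ with |λ| = 1 and let Ψ^L, Ψ^R : ℤ → ℂ be an eigenvector of the 2-state diagonal quantum walk with one defect with eigenvalue λ. If b = 0 (i.e., the defect coin is itself diagonal), then the measure μ(x) = |Ψ^L(x)|² + |Ψ^R(x)|² is uniform: μ(x) = |Ψ^L(0)|² + |Ψ^R(0)|² for all x ∈ ℤ. -/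
/-!
With a diagonal defect coin (`b = 0`) the two components decouple, and every equation of the
walk reads `l * u = e * v` with `‖l‖ = ‖e‖ = 1` (the off-defect factors are phases, and `a`, `d`
are unimodular because `‖a‖ ^ 2 = 1`). Hence `‖Ψ^L‖` and `‖Ψ^R‖` are both `1`-periodic on `ℤ`,
i.e. constant.
-/

open Complex

theorem norm_eq_norm_of_mul_eq_mul_s3 {α : Type*} [NormedDivisionRing α] {l e u v : α}
    (hl : ‖l‖ = 1) (he : ‖e‖ = 1) (h : l * u = e * v) : ‖u‖ = ‖v‖ := by
  simpa [hl, he] using congrArg norm h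

theorem norm_apply_eq_norm_zero_of_unimodular_step {α : Type*} [NormedDivisionRing α]
    {f : ℤ → α} (h : ∀ x, ∃ l e : α, ‖l‖ = 1 ∧ ‖e‖ = 1 ∧ l * f x = e * f (x + 1)) (x : ℤ) :
    ‖f x‖ = ‖f 0‖ := by
  have hper : Function.Periodic (fun y => ‖f y‖) 1 := fun y => by
    obtain ⟨l, e, hl, he, hy⟩ := h y
    exact (norm_eq_norm_of_mul_eq_mul_s3 hl he hy).symm
  simpa using hper.int_mul_eq x

theorem norm_mul_exp_neg_I_mul_ofReal {Δ : ℂ} (hΔ : ‖Δ‖ = 1) (σ : ℝ) :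
    ‖Δ * exp (-(I * σ))‖ = 1 := by
  rw [norm_mul, hΔ, one_mul, ← mul_neg, ← ofReal_neg, norm_exp_I_mul_ofReal]

/-- If the defect coin is itself diagonal (b = 0), the stationary measure is uniform. -/
theorem two_state_diagonal_defect_uniform_of_diagonal_defect
    (σp σm : ℝ) (Δp Δm Δ0 a b c d : ℂ)
    (hΔp : ‖Δp‖ = 1) (hΔm : ‖Δm‖ = 1) (hΔ0 : ‖Δ0‖ = 1)
    (hab : ‖a‖ ^ 2 + ‖b‖ ^ 2 = 1)
    (hc : c = -Δ0 * (starRingEnd ℂ) b) (hd : d = Δ0 * (starRingEnd ℂ) a)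
    (hb : b = 0)
    (lam : ℂ) (hlam : ‖lam‖ = 1)
    (ΨL ΨR : ℤ → ℂ)
    (hL1 : ∀ x : ℤ, 0 ≤ x →
      lam * ΨL x = Complex.exp (Complex.I * (σp : ℂ)) * ΨL (x + 1))
    (hL2 : ∀ x : ℤ, x ≤ -2 →
      lam * ΨL x = Complex.exp (Complex.I * (σm : ℂ)) * ΨL (x + 1))
    (hL3 : lam * ΨL (-1) = a * ΨL 0 + b * ΨR 0)
    (hR1 : ∀ x : ℤ, 2 ≤ x →
      lam * ΨR x = Δp * Complex.exp (-(Complex.I * (σp : ℂ))) * ΨR (x - 1))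
    (hR2 : ∀ x : ℤ, x ≤ 0 →
      lam * ΨR x = Δm * Complex.exp (-(Complex.I * (σm : ℂ))) * ΨR (x - 1))
    (hR3 : lam * ΨR 1 = c * ΨL 0 + d * ΨR 0)
    (μ : ℤ → ℝ)
    (hμ : ∀ x : ℤ, μ x = ‖ΨL x‖ ^ 2 + ‖ΨR x‖ ^ 2) :
    ∀ x : ℤ, μ x = ‖ΨL 0‖ ^ 2 + ‖ΨR 0‖ ^ 2 := by
  have ha : ‖a‖ = 1 :=
    (pow_eq_one_iff_of_nonneg (norm_nonneg a) two_ne_zero).mp (by simpa [hb] using hab)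
  have hd1 : ‖d‖ = 1 := by simp [hd, hΔ0, ha]
  have hL : ∀ x, ‖ΨL x‖ = ‖ΨL 0‖ := norm_apply_eq_norm_zero_of_unimodular_step fun x => by
    obtain hx | rfl | hx : 0 ≤ x ∨ x = -1 ∨ x ≤ -2 := by omega
    · exact ⟨lam, _, hlam, norm_exp_I_mul_ofReal σp, hL1 x hx⟩
    · exact ⟨lam, a, hlam, ha, by rw [hL3, hb]; norm_num⟩
    · exact ⟨lam, _, hlam, norm_exp_I_mul_ofReal σm, hL2 x hx⟩
  have hR : ∀ x, ‖ΨR x‖ = ‖ΨR 0‖ := norm_apply_eq_norm_zero_of_unimodular_step fun x => by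
    obtain hx | rfl | hx : 1 ≤ x ∨ x = 0 ∨ x ≤ -1 := by omega
    · refine ⟨_, lam, norm_mul_exp_neg_I_mul_ofReal hΔp σp, hlam, ?_⟩
      simpa using (hR1 (x + 1) (by omega)).symm
    · exact ⟨d, lam, hd1, hlam, by simp [hR3, hc, hb]⟩
    · refine ⟨_, lam, norm_mul_exp_neg_I_mul_ofReal hΔm σm, hlam, ?_⟩
      simpa using (hR2 (x + 1) (by omega)).symm
  intro x
  rw [hμ x, hL x, hR x]
end

section
/- Let λ ∈ ℂ with |λ| = 1 and let Ψ^L, Ψ^R : ℤ → ℂ be an eigenvector of the 2-state diagonal quantum walk with one defect with eigenvalue λ, with α = Ψ^L(0), β = Ψ^R(0). For every z ∈ ℂ with 0 < |z| < 1, the generating functions f^L₊(z) = Σ_{x=1}^{∞} Ψ^L(x)·z^x and f^R₊(z) = Σ_{x=1}^{∞} Ψ^R(x)·z^x converge absolutely and satisfy (λ − e^{iσ₊}·z⁻¹)·f^L₊(z) = −λα and (λ − Δ⁺e^{−iσ₊}·z)·f^R₊(z) = (cα + dβ)·z. -/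
/-! On the half-line `x ≥ 1` the eigenvalue equations are first-order recurrences with constant
coefficients, so `Ψ^L` and `Ψ^R` are geometric there, with ratios `λ e^{-iσ₊}` and
`λ⁻¹ Δ⁺ e^{-iσ₊}` of modulus one. Hence both generating functions are geometric series in a
variable of modulus `|z| < 1`, and multiplying such a series `∑ aₙ z^{n+1}` by `1 - r z`
leaves only its first term `a₀ z`. -/

theorem eq_pow_mul_of_succ_eq_mul {M : Type*} [Monoid M] {a : ℕ → M} {r : M}
    (h : ∀ n, a (n + 1) = r * a n) (n : ℕ) : a n = r ^ n * a 0 := by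
  induction n with
  | zero => simp
  | succ n ih => rw [h, ih, pow_succ', mul_assoc]

theorem summable_and_one_sub_mul_tsum_of_succ_eq_mul {𝕜 : Type*} [NormedField 𝕜]
    {a : ℕ → 𝕜} {r z : 𝕜}
    (h : ∀ n, a (n + 1) = r * a n) (hrz : ‖r * z‖ < 1) :
    (Summable fun n => ‖a n * z ^ (n + 1)‖) ∧
      (1 - r * z) * ∑' n, a n * z ^ (n + 1) = a 0 * z := by
  have hterm : ∀ n, a n * z ^ (n + 1) = a 0 * z * (r * z) ^ n :=
      fun n => by
    rw [eq_pow_mul_of_succ_eq_mul h n, pow_succ, mul_pow]; ring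
  have hrz1 : 1 - r * z ≠ 0 := sub_ne_zero.mpr fun h1 => by simp [← h1] at hrz
  refine ⟨?_, ?_⟩
  · simpa only [hterm, norm_mul] using
      (summable_norm_geometric_of_norm_lt_one hrz).mul_left ‖a 0 * z‖
  · rw [tsum_congr hterm, tsum_mul_left, tsum_geometric_of_norm_lt_one hrz]
    field_simp

theorem two_state_diagonal_defect_generating_function_plus_general
    (σp : ℝ) (Δp c d : ℂ)
    (hΔp : ‖Δp‖ = 1)
    (lam : ℂ) (hlam : ‖lam‖ = 1)
    (ΨL ΨR : ℤ → ℂ)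
    (hL1 : ∀ x : ℤ, 0 ≤ x →
      lam * ΨL x = Complex.exp (Complex.I * (σp : ℂ)) * ΨL (x + 1))
    (hR1 : ∀ x : ℤ, 2 ≤ x →
      lam * ΨR x = Δp * Complex.exp (-(Complex.I * (σp : ℂ))) * ΨR (x - 1))
    (hR3 : lam * ΨR 1 = c * ΨL 0 + d * ΨR 0)
    (α β : ℂ) (hα : α = ΨL 0) (hβ : β = ΨR 0) :
    ∀ z : ℂ, 0 < ‖z‖ → ‖z‖ < 1 →
      (Summable fun n : ℕ => ‖ΨL ((n : ℤ) + 1) * z ^ (n + 1)‖) ∧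
      (Summable fun n : ℕ => ‖ΨR ((n : ℤ) + 1) * z ^ (n + 1)‖) ∧
      (lam - Complex.exp (Complex.I * (σp : ℂ)) * z⁻¹)
          * (∑' n : ℕ, ΨL ((n : ℤ) + 1) * z ^ (n + 1)) = -lam * α ∧
      (lam - Δp * Complex.exp (-(Complex.I * (σp : ℂ))) * z)
          * (∑' n : ℕ, ΨR ((n : ℤ) + 1) * z ^ (n + 1)) = (c * α + d * β) * z := by
  intro z hz0 hz1
  have hlam0 : lam ≠ 0 := norm_ne_zero_iff.mp (by simp [hlam])
  have hz : z ≠ 0 := norm_pos_iff.mp hz0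
  set e := Complex.exp (Complex.I * (σp : ℂ))
  set e' := Complex.exp (-(Complex.I * (σp : ℂ)))
  have he0 : e ≠ 0 := Complex.exp_ne_zero _
  have he : ‖e‖ = 1 := Complex.norm_exp_I_mul_ofReal σp
  have he' : ‖e'‖ = 1 := by simp [e', Complex.norm_exp]
  have hL (n : ℕ) : ΨL (((n + 1 : ℕ) : ℤ) + 1) = e⁻¹ * lam * ΨL ((n : ℤ) + 1) := by
    rw [mul_assoc, eq_inv_mul_iff_mul_eq₀ he0, hL1 _ (by positivity)]
    push_cast; rfl
  have hR (n : ℕ) : ΨR (((n + 1 : ℕ) : ℤ) + 1) = lam⁻¹ * Δp * e' * ΨR ((n : ℤ) + 1) := by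
    have h := hR1 (((n + 1 : ℕ) : ℤ) + 1) (by omega)
    rw [show ((n + 1 : ℕ) : ℤ) + 1 - 1 = n + 1 by push_cast; ring] at h
    rw [mul_assoc, mul_assoc, eq_inv_mul_iff_mul_eq₀ hlam0, h, mul_assoc]
  obtain ⟨sL, fL⟩ := summable_and_one_sub_mul_tsum_of_succ_eq_mul
    (a := fun n : ℕ => ΨL ((n : ℤ) + 1)) hL (by simpa [he, hlam] using hz1)
  obtain ⟨sR, fR⟩ := summable_and_one_sub_mul_tsum_of_succ_eq_mul
    (a := fun n : ℕ => ΨR ((n : ℤ) + 1)) hR (by simpa [he', hlam, hΔp] using hz1)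
  refine ⟨sL, sR, ?_, ?_⟩
  · calc _ = -(e * z⁻¹) *
            ((1 - e⁻¹ * lam * z) * ∑' n : ℕ, ΨL ((n : ℤ) + 1) * z ^ (n + 1)) := by
          field_simp; ring
      _ = -lam * α := by
          have h0 : lam * ΨL 0 = e * ΨL 1 := by simpa using hL1 0 le_rfl
          rw [fL, hα, Nat.cast_zero, zero_add]
          field_simp
          linear_combination h0
  · calc _ = lam *
            ((1 - lam⁻¹ * Δp * e' * z) * ∑' n : ℕ, ΨR ((n : ℤ) + 1) * z ^ (n + 1)) := by
          field_simp
      _ = (c * α + d * β) * z := by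
          rw [fR, hα, hβ, ← hR3]; push_cast; ring

/-- Lemma 3.1, positive part: the generating functions on the positive half-line
converge absolutely for 0 < |z| < 1 and satisfy the splitted equations. -/
theorem two_state_diagonal_defect_generating_function_plus
    (σp σm : ℝ) (Δp Δm Δ0 a b c d : ℂ)
    (hΔp : ‖Δp‖ = 1) (hΔm : ‖Δm‖ = 1) (hΔ0 : ‖Δ0‖ = 1)
    (hab : ‖a‖ ^ 2 + ‖b‖ ^ 2 = 1)
    (hc : c = -Δ0 * (starRingEnd ℂ) b) (hd : d = Δ0 * (starRingEnd ℂ) a)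
    (lam : ℂ) (hlam : ‖lam‖ = 1)
    (ΨL ΨR : ℤ → ℂ)
    (hL1 : ∀ x : ℤ, 0 ≤ x →
      lam * ΨL x = Complex.exp (Complex.I * (σp : ℂ)) * ΨL (x + 1))
    (hL2 : ∀ x : ℤ, x ≤ -2 →
      lam * ΨL x = Complex.exp (Complex.I * (σm : ℂ)) * ΨL (x + 1))
    (hL3 : lam * ΨL (-1) = a * ΨL 0 + b * ΨR 0)
    (hR1 : ∀ x : ℤ, 2 ≤ x →
      lam * ΨR x = Δp * Complex.exp (-(Complex.I * (σp : ℂ))) * ΨR (x - 1))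
    (hR2 : ∀ x : ℤ, x ≤ 0 →
      lam * ΨR x = Δm * Complex.exp (-(Complex.I * (σm : ℂ))) * ΨR (x - 1))
    (hR3 : lam * ΨR 1 = c * ΨL 0 + d * ΨR 0)
    (α β : ℂ) (hα : α = ΨL 0) (hβ : β = ΨR 0) :
    ∀ z : ℂ, 0 < ‖z‖ → ‖z‖ < 1 →
      (Summable fun n : ℕ => ‖ΨL ((n : ℤ) + 1) * z ^ (n + 1)‖) ∧
      (Summable fun n : ℕ => ‖ΨR ((n : ℤ) + 1) * z ^ (n + 1)‖) ∧
      (lam - Complex.exp (Complex.I * (σp : ℂ)) * z⁻¹)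
          * (∑' n : ℕ, ΨL ((n : ℤ) + 1) * z ^ (n + 1)) = -lam * α ∧
      (lam - Δp * Complex.exp (-(Complex.I * (σp : ℂ))) * z)
          * (∑' n : ℕ, ΨR ((n : ℤ) + 1) * z ^ (n + 1)) = (c * α + d * β) * z :=
  two_state_diagonal_defect_generating_function_plus_general σp Δp c d hΔp lam hlam ΨL ΨR hL1 hR1
    hR3 α β hα hβ
end

section
/- Let λ ∈ ℂ with |λ| = 1 and let Ψ^L, Ψ^R : ℤ → ℂ be an eigenvector of the 2-state diagonal quantum walk with one defect with eigenvalue λ, with α = Ψ^L(0), β = Ψ^R(0). For every z ∈ ℂ with |z| > 1, the generating functions f^L₋(z) = Σ_{x=1}^{∞} Ψ^L(−x)·z^{−x} and f^R₋(z) = Σ_{x=1}^{∞} Ψ^R(−x)·z^{−x} converge absolutely and satisfy (λ − e^{iσ₋}·z⁻¹)·f^L₋(z) = (aα + bβ)·z⁻¹ and (λ − Δ⁻e^{−iσ₋}·z)·f^R₋(z) = −λβ. -/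
/-! On the negative half-line the eigenvalue equations are first-order recursions with
constant coefficients, so `Ψ^L(-x)` and `Ψ^R(-x)` are geometric in `x` with ratios of
modulus one. For `|z| > 1` both generating functions are convergent geometric series,
and the two identities are their closed forms, the initial terms being supplied by
`λΨ^L(-1) = aα + bβ` and `λΨ^R(0) = Δ⁻e^{-iσ₋}Ψ^R(-1)`. -/

section GeometricRecursion

variable {𝕜 : Type*} [NormedField 𝕜] {u : ℕ → 𝕜} {l m w : 𝕜}

lemma eq_div_pow_mul_of_mul_succ_eq (hu : ∀ n, l * u (n + 1) = m * u n) (hl : l ≠ 0)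
    (n : ℕ) : u n = (m / l) ^ n * u 0 := by
  induction n with
  | zero => simp
  | succ n ih =>
    have hstep : u (n + 1) = m / l * u n := by
      rw [div_mul_eq_mul_div, eq_div_iff hl, mul_comm, hu]
    rw [hstep, ih, pow_succ']
    ring

lemma mul_pow_eq_of_mul_succ_eq (hu : ∀ n, l * u (n + 1) = m * u n) (hl : l ≠ 0) (n : ℕ) :
    u n * w ^ n = u 0 * (m * w / l) ^ n := by
  rw [eq_div_pow_mul_of_mul_succ_eq hu hl, mul_div_right_comm, mul_pow]
  ring

lemma ne_zero_of_norm_mul_lt (h : ‖m * w‖ < ‖l‖) : l ≠ 0 :=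
  norm_pos_iff.mp ((norm_nonneg _).trans_lt h)

lemma norm_mul_div_lt_one_of_norm_mul_lt (h : ‖m * w‖ < ‖l‖) : ‖m * w / l‖ < 1 := by
  rw [norm_div, div_lt_one ((norm_nonneg _).trans_lt h)]
  exact h

lemma summable_norm_mul_pow_of_mul_succ_eq (hu : ∀ n, l * u (n + 1) = m * u n)
    (h : ‖m * w‖ < ‖l‖) : Summable fun n => ‖u n * w ^ n‖ := by
  simp_rw [mul_pow_eq_of_mul_succ_eq hu (ne_zero_of_norm_mul_lt h), norm_mul, norm_pow]
  exact (summable_geometric_of_lt_one (norm_nonneg _)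
    (norm_mul_div_lt_one_of_norm_mul_lt h)).mul_left _

lemma sub_mul_tsum_mul_pow_of_mul_succ_eq [CompleteSpace 𝕜]
    (hu : ∀ n, l * u (n + 1) = m * u n) (h : ‖m * w‖ < ‖l‖) :
    (l - m * w) * ∑' n, u n * w ^ n = l * u 0 := by
  have hl := ne_zero_of_norm_mul_lt h
  have hρ := norm_mul_div_lt_one_of_norm_mul_lt h
  have hlm : l - m * w ≠ 0 := sub_ne_zero.mpr fun h0 => by simp [h0] at h
  simp_rw [mul_pow_eq_of_mul_succ_eq hu hl]
  rw [tsum_mul_left, tsum_geometric_of_norm_lt_one hρ, one_sub_div hl, inv_div]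
  field_simp

end GeometricRecursion

lemma zpow_neg_natCast_add_one {𝕜 : Type*} [DivisionRing 𝕜] (z : 𝕜) (n : ℕ) :
    z ^ (-((n : ℤ) + 1)) = z⁻¹ * z⁻¹ ^ n := by
  rw [← Nat.cast_succ, zpow_neg, zpow_natCast, ← inv_pow, pow_succ']

theorem two_state_diagonal_defect_generating_function_minus_general
    (σm : ℝ) (Δm a b : ℂ)
    (hΔm : ‖Δm‖ = 1)
    (lam : ℂ) (hlam : ‖lam‖ = 1)
    (ΨL ΨR : ℤ → ℂ)
    (hL2 : ∀ x : ℤ, x ≤ -2 →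
      lam * ΨL x = Complex.exp (Complex.I * (σm : ℂ)) * ΨL (x + 1))
    (hL3 : lam * ΨL (-1) = a * ΨL 0 + b * ΨR 0)
    (hR2 : ∀ x : ℤ, x ≤ 0 →
      lam * ΨR x = Δm * Complex.exp (-(Complex.I * (σm : ℂ))) * ΨR (x - 1))
    (α β : ℂ) (hα : α = ΨL 0) (hβ : β = ΨR 0) :
    ∀ z : ℂ, 1 < ‖z‖ →
      (Summable fun n : ℕ => ‖ΨL (-((n : ℤ) + 1)) * z ^ (-((n : ℤ) + 1))‖) ∧
      (Summable fun n : ℕ => ‖ΨR (-((n : ℤ) + 1)) * z ^ (-((n : ℤ) + 1))‖) ∧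
      (lam - Complex.exp (Complex.I * (σm : ℂ)) * z⁻¹)
          * (∑' n : ℕ, ΨL (-((n : ℤ) + 1)) * z ^ (-((n : ℤ) + 1)))
        = (a * α + b * β) * z⁻¹ ∧
      (lam - Δm * Complex.exp (-(Complex.I * (σm : ℂ))) * z)
          * (∑' n : ℕ, ΨR (-((n : ℤ) + 1)) * z ^ (-((n : ℤ) + 1))) = -lam * β := by
  intro z hz
  set e := Complex.exp (Complex.I * (σm : ℂ))
  set D := Δm * Complex.exp (-(Complex.I * (σm : ℂ)))
  have hw : ‖z⁻¹‖ < 1 := by rw [norm_inv]; exact inv_lt_one_of_one_lt₀ hz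
  have hLnorm : ‖e * z⁻¹‖ < ‖lam‖ := by simpa [e, Complex.norm_exp, hlam] using hw
  have hRnorm : ‖lam * z⁻¹‖ < ‖D‖ := by simpa [D, Complex.norm_exp, hlam, hΔm] using hw
  have hLrec (n : ℕ) : lam * ΨL (-((↑(n + 1) : ℤ) + 1)) = e * ΨL (-((n : ℤ) + 1)) := by
    convert hL2 (-((n : ℤ) + 2)) (by omega) using 3 <;> push_cast <;> ring
  have hRrec (n : ℕ) : D * ΨR (-((↑(n + 1) : ℤ) + 1)) = lam * ΨR (-((n : ℤ) + 1)) := by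
    convert (hR2 (-((n : ℤ) + 1)) (by omega)).symm using 3
    push_cast
    ring
  have hterm (Ψ : ℤ → ℂ) (n : ℕ) :
      Ψ (-((n : ℤ) + 1)) * z ^ (-((n : ℤ) + 1)) = z⁻¹ * (Ψ (-((n : ℤ) + 1)) * z⁻¹ ^ n) := by
    rw [zpow_neg_natCast_add_one, mul_left_comm]
  simp_rw [hterm, norm_mul z⁻¹, tsum_mul_left]
  refine ⟨(summable_norm_mul_pow_of_mul_succ_eq
      (u := fun n : ℕ => ΨL (-((n : ℤ) + 1))) hLrec hLnorm).mul_left _,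
    (summable_norm_mul_pow_of_mul_succ_eq
      (u := fun n : ℕ => ΨR (-((n : ℤ) + 1))) hRrec hRnorm).mul_left _, ?_, ?_⟩
  · have hLgen := sub_mul_tsum_mul_pow_of_mul_succ_eq
      (u := fun n : ℕ => ΨL (-((n : ℤ) + 1))) hLrec hLnorm
    simp only [Nat.cast_zero, zero_add] at hLgen
    rw [hα, hβ, ← hL3, ← hLgen]
    ring
  · have hRgen := sub_mul_tsum_mul_pow_of_mul_succ_eq
      (u := fun n : ℕ => ΨR (-((n : ℤ) + 1))) hRrec hRnorm
    simp only [Nat.cast_zero, zero_add] at hRgen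
    have hz0 : z ≠ 0 := norm_pos_iff.mp (one_pos.trans hz)
    rw [hβ, neg_mul, hR2 0 le_rfl, zero_sub, ← hRgen]
    field_simp
    ring

/-- Lemma 3.1, negative part: the generating functions on the negative half-line
converge absolutely for |z| > 1 and satisfy the splitted equations. -/
theorem two_state_diagonal_defect_generating_function_minus
    (σp σm : ℝ) (Δp Δm Δ0 a b c d : ℂ)
    (hΔp : ‖Δp‖ = 1) (hΔm : ‖Δm‖ = 1) (hΔ0 : ‖Δ0‖ = 1)
    (hab : ‖a‖ ^ 2 + ‖b‖ ^ 2 = 1)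
    (hc : c = -Δ0 * (starRingEnd ℂ) b) (hd : d = Δ0 * (starRingEnd ℂ) a)
    (lam : ℂ) (hlam : ‖lam‖ = 1)
    (ΨL ΨR : ℤ → ℂ)
    (hL1 : ∀ x : ℤ, 0 ≤ x →
      lam * ΨL x = Complex.exp (Complex.I * (σp : ℂ)) * ΨL (x + 1))
    (hL2 : ∀ x : ℤ, x ≤ -2 →
      lam * ΨL x = Complex.exp (Complex.I * (σm : ℂ)) * ΨL (x + 1))
    (hL3 : lam * ΨL (-1) = a * ΨL 0 + b * ΨR 0)
    (hR1 : ∀ x : ℤ, 2 ≤ x →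
      lam * ΨR x = Δp * Complex.exp (-(Complex.I * (σp : ℂ))) * ΨR (x - 1))
    (hR2 : ∀ x : ℤ, x ≤ 0 →
      lam * ΨR x = Δm * Complex.exp (-(Complex.I * (σm : ℂ))) * ΨR (x - 1))
    (hR3 : lam * ΨR 1 = c * ΨL 0 + d * ΨR 0)
    (α β : ℂ) (hα : α = ΨL 0) (hβ : β = ΨR 0) :
    ∀ z : ℂ, 1 < ‖z‖ →
      (Summable fun n : ℕ => ‖ΨL (-((n : ℤ) + 1)) * z ^ (-((n : ℤ) + 1))‖) ∧
      (Summable fun n : ℕ => ‖ΨR (-((n : ℤ) + 1)) * z ^ (-((n : ℤ) + 1))‖) ∧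
      (lam - Complex.exp (Complex.I * (σm : ℂ)) * z⁻¹)
          * (∑' n : ℕ, ΨL (-((n : ℤ) + 1)) * z ^ (-((n : ℤ) + 1)))
        = (a * α + b * β) * z⁻¹ ∧
      (lam - Δm * Complex.exp (-(Complex.I * (σm : ℂ))) * z)
          * (∑' n : ℕ, ΨR (-((n : ℤ) + 1)) * z ^ (-((n : ℤ) + 1))) = -lam * β :=
  two_state_diagonal_defect_generating_function_minus_general σm Δm a b hΔm lam hlam ΨL ΨR hL2 hL3
    hR2 α β hα hβ
end

section
/- Let λ ∈ ℂ with λ ≠ 0, λ ≠ e^{−iσ₊} and λ ≠ e^{−iσ₋}, and let Ψ^L, Ψ^O, Ψ^R : ℤ → ℂ be an eigenvector of the 3-state diagonal quantum walk with one defect with eigenvalue λ, with α = Ψ^L(0), γ = Ψ^O(0), β = Ψ^R(0). Then the amplitudes are given explicitly by: for x ≥ 1, Ψ^L(x) = (λ·e^{−iσ₊})^x·α, Ψ^O(x) = 0, Ψ^R(x) = λ⁻¹(gα + hγ + iβ)·(λ⁻¹Δ⁺)^{x−1}; and for x ≤ −1, Ψ^L(x) = λ⁻¹(aα + bγ + cβ)·(λ⁻¹e^{iσ₋})^{−x−1},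 Ψ^O(x) = 0, Ψ^R(x) = (λ·(Δ⁻)⁻¹)^{−x}·β. -/
/-!
Away from the defect each component obeys a first-order recurrence with constant coefficient, so it
is a geometric sequence in `x` anchored at the site next to the defect, where the defect coin fixes
its value in terms of `Ψ(0)`. The `O`-component is not transported at all: off the defect it
satisfies `λ Ψᴼ(x) = e^{-iσ±} Ψᴼ(x)`, which forces `Ψᴼ(x) = 0` as `λ ≠ e^{-iσ±}`.
-/

section GeometricSequence

variable {M : Type*} [DivInvMonoid M] {f : ℤ → M} {q : M} {m : ℤ}

theorem eq_zpow_sub_mul_of_forall_add_one_eq (hf : ∀ n, m ≤ n → f (n + 1) = q * f n) :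
    ∀ x, m ≤ x → f x = q ^ (x - m) * f m := by
  have hnat : ∀ k : ℕ, f (m + k) = q ^ k * f m := by
    intro k
    induction k with
    | zero => simp
    | succ k ih =>
      rw [Nat.cast_succ, ← add_assoc, hf _ (by omega), ih, pow_succ', mul_assoc]
  intro x hx
  obtain ⟨k, rfl⟩ := Int.le.dest hx
  rw [add_sub_cancel_left, zpow_natCast, hnat]

theorem eq_zpow_sub_mul_of_forall_sub_one_eq (hf : ∀ n, n ≤ m → f (n - 1) = q * f n) :
    ∀ x, x ≤ m → f x = q ^ (m - x) * f m := by
  intro x hx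
  have hreflect := eq_zpow_sub_mul_of_forall_add_one_eq (f := fun n ↦ f (-n)) (q := q) (m := -m)
    (fun n hn ↦ by rw [neg_add']; exact hf (-n) (by omega)) (-x) (by omega)
  simpa only [neg_neg, sub_neg_eq_add, neg_add_eq_sub] using hreflect

end GeometricSequence

theorem three_state_diagonal_defect_amplitudes_general
    (σp σm : ℝ) (Δp Δm a b c g h i : ℂ)
    (hΔm : ‖Δm‖ = 1)
    (lam : ℂ) (hlam0 : lam ≠ 0)
    (hlamp : lam ≠ Complex.exp (-(Complex.I * (σp : ℂ))))
    (hlamm : lam ≠ Complex.exp (-(Complex.I * (σm : ℂ))))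
    (ΨL ΨO ΨR : ℤ → ℂ)
    (hL1 : ∀ x : ℤ, 0 ≤ x →
      lam * ΨL x = Complex.exp (Complex.I * (σp : ℂ)) * ΨL (x + 1))
    (hL2 : ∀ x : ℤ, x ≤ -2 →
      lam * ΨL x = Complex.exp (Complex.I * (σm : ℂ)) * ΨL (x + 1))
    (hL3 : lam * ΨL (-1) = a * ΨL 0 + b * ΨO 0 + c * ΨR 0)
    (hO1 : ∀ x : ℤ, 1 ≤ x →
      lam * ΨO x = Complex.exp (-(Complex.I * (σp : ℂ))) * ΨO x)
    (hO2 : ∀ x : ℤ, x ≤ -1 →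
      lam * ΨO x = Complex.exp (-(Complex.I * (σm : ℂ))) * ΨO x)
    (hR1 : ∀ x : ℤ, 2 ≤ x → lam * ΨR x = Δp * ΨR (x - 1))
    (hR2 : ∀ x : ℤ, x ≤ 0 → lam * ΨR x = Δm * ΨR (x - 1))
    (hR3 : lam * ΨR 1 = g * ΨL 0 + h * ΨO 0 + i * ΨR 0)
    (α γ β : ℂ) (hα : α = ΨL 0) (hγ : γ = ΨO 0) (hβ : β = ΨR 0) :
    (∀ x : ℤ, 1 ≤ x →
      ΨL x = (lam * Complex.exp (-(Complex.I * (σp : ℂ)))) ^ x * α ∧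
      ΨO x = 0 ∧
      ΨR x = lam⁻¹ * (g * α + h * γ + i * β) * (lam⁻¹ * Δp) ^ (x - 1)) ∧
    (∀ x : ℤ, x ≤ -1 →
      ΨL x = lam⁻¹ * (a * α + b * γ + c * β)
              * (lam⁻¹ * Complex.exp (Complex.I * (σm : ℂ))) ^ (-x - 1) ∧
      ΨO x = 0 ∧
      ΨR x = (lam * Δm⁻¹) ^ (-x) * β) := by
  subst hα hγ hβ
  have hΔm0 : Δm ≠ 0 := by rw [← norm_ne_zero_iff, hΔm]; exact one_ne_zero
  have hLpos := eq_zpow_sub_mul_of_forall_add_one_eq (f := ΨL)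
      (q := lam * Complex.exp (-(Complex.I * σp))) (m := 0) fun n hn ↦ by
    rw [Complex.exp_neg]
    field_simp
    linear_combination (hL1 n hn).symm
  have hRpos := eq_zpow_sub_mul_of_forall_add_one_eq (f := ΨR)
      (q := lam⁻¹ * Δp) (m := 1) fun n hn ↦ by
    field_simp
    linear_combination (by simpa using hR1 (n + 1) (by omega) : lam * ΨR (n + 1) = Δp * ΨR n)
  have hLneg := eq_zpow_sub_mul_of_forall_sub_one_eq (f := ΨL)
      (q := lam⁻¹ * Complex.exp (Complex.I * σm)) (m := -1) fun n hn ↦ by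
    field_simp
    linear_combination (by simpa using hL2 (n - 1) (by omega) :
      lam * ΨL (n - 1) = Complex.exp (Complex.I * σm) * ΨL n)
  have hRneg := eq_zpow_sub_mul_of_forall_sub_one_eq (f := ΨR)
      (q := lam * Δm⁻¹) (m := 0) fun n hn ↦ by
    field_simp
    linear_combination -hR2 n hn
  have hL0 : ΨL (-1) = lam⁻¹ * (a * ΨL 0 + b * ΨO 0 + c * ΨR 0) :=
    (eq_inv_mul_iff_mul_eq₀ hlam0).2 hL3
  have hR0 : ΨR 1 = lam⁻¹ * (g * ΨL 0 + h * ΨO 0 + i * ΨR 0) :=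
    (eq_inv_mul_iff_mul_eq₀ hlam0).2 hR3
  refine ⟨fun x hx ↦ ⟨?_, ?_, ?_⟩, fun x hx ↦ ⟨?_, ?_, ?_⟩⟩
  · simpa using hLpos x (by omega)
  · exact (mul_eq_mul_right_iff.mp (hO1 x hx)).resolve_left hlamp
  · rw [hRpos x hx, hR0, mul_comm]
  · rw [hLneg x hx, hL0, mul_comm, neg_sub_comm]
  · exact (mul_eq_mul_right_iff.mp (hO2 x hx)).resolve_left hlamm
  · simpa using hRneg x (by omega)

/-- Explicit form of the stationary amplitudes of the 3-state diagonal QW with one defect. -/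
theorem three_state_diagonal_defect_amplitudes
    (σp σm : ℝ) (Δp Δm a b c d e f g h i : ℂ)
    (hΔp : ‖Δp‖ = 1) (hΔm : ‖Δm‖ = 1)
    (hU0 : !![a, b, c; d, e, f; g, h, i] ∈ Matrix.unitaryGroup (Fin 3) ℂ)
    (lam : ℂ) (hlam0 : lam ≠ 0)
    (hlamp : lam ≠ Complex.exp (-(Complex.I * (σp : ℂ))))
    (hlamm : lam ≠ Complex.exp (-(Complex.I * (σm : ℂ))))
    (ΨL ΨO ΨR : ℤ → ℂ)
    (hL1 : ∀ x : ℤ, 0 ≤ x →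
      lam * ΨL x = Complex.exp (Complex.I * (σp : ℂ)) * ΨL (x + 1))
    (hL2 : ∀ x : ℤ, x ≤ -2 →
      lam * ΨL x = Complex.exp (Complex.I * (σm : ℂ)) * ΨL (x + 1))
    (hL3 : lam * ΨL (-1) = a * ΨL 0 + b * ΨO 0 + c * ΨR 0)
    (hO1 : ∀ x : ℤ, 1 ≤ x →
      lam * ΨO x = Complex.exp (-(Complex.I * (σp : ℂ))) * ΨO x)
    (hO2 : ∀ x : ℤ, x ≤ -1 →
      lam * ΨO x = Complex.exp (-(Complex.I * (σm : ℂ))) * ΨO x)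
    (hO3 : lam * ΨO 0 = d * ΨL 0 + e * ΨO 0 + f * ΨR 0)
    (hR1 : ∀ x : ℤ, 2 ≤ x → lam * ΨR x = Δp * ΨR (x - 1))
    (hR2 : ∀ x : ℤ, x ≤ 0 → lam * ΨR x = Δm * ΨR (x - 1))
    (hR3 : lam * ΨR 1 = g * ΨL 0 + h * ΨO 0 + i * ΨR 0)
    (α γ β : ℂ) (hα : α = ΨL 0) (hγ : γ = ΨO 0) (hβ : β = ΨR 0) :
    (∀ x : ℤ, 1 ≤ x →
      ΨL x = (lam * Complex.exp (-(Complex.I * (σp : ℂ)))) ^ x * α ∧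
      ΨO x = 0 ∧
      ΨR x = lam⁻¹ * (g * α + h * γ + i * β) * (lam⁻¹ * Δp) ^ (x - 1)) ∧
    (∀ x : ℤ, x ≤ -1 →
      ΨL x = lam⁻¹ * (a * α + b * γ + c * β)
              * (lam⁻¹ * Complex.exp (Complex.I * (σm : ℂ))) ^ (-x - 1) ∧
      ΨO x = 0 ∧
      ΨR x = (lam * Δm⁻¹) ^ (-x) * β) :=
  three_state_diagonal_defect_amplitudes_general σp σm Δp Δm a b c g h i hΔm lam hlam0 hlamp hlamm
    ΨL ΨO ΨR hL1 hL2 hL3 hO1 hO2 hR1 hR2 hR3 α γ β hα hγ hβ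
end

section
/- Let λ ∈ ℂ with λ ≠ 0, and let α, β, γ ∈ ℂ satisfy the consistency condition λγ = dα + eγ + fβ. Define Ψ^L, Ψ^O, Ψ^R : ℤ → ℂ by Ψ^L(0) = α, Ψ^O(0) = γ, Ψ^R(0) = β, and for x ≥ 1: Ψ^L(x) = (λ·e^{−iσ₊})^x·α, Ψ^O(x) = 0, Ψ^R(x) = λ⁻¹(gα + hγ + iβ)·(λ⁻¹Δ⁺)^{x−1}; for x ≤ −1: Ψ^L(x) = λ⁻¹(aα + bγ + cβ)·(λ⁻¹e^{iσ₋})^{−x−1}, Ψ^O(x) = 0, Ψ^R(x) = (λ·(Δ⁻)⁻¹)^{−x}·β. Then (Ψ^L, Ψ^O, Ψ^R) is an eigenvector of the 3-state diagonal quantum walk with one defect with eigenvalue λ. -/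
/-!
Away from the defect every component is a geometric sequence, so each bulk equation
`lam * ψ x = μ * ψ (x ± 1)` reduces to one identity `lam * r = μ` between the ratio `r` and
the coin entry `μ`. The three equations at the defect hold because the prefactors of the
outgoing amplitudes are chosen as `lam⁻¹` times the defect-coin output, together with the
consistency condition for `ΨO 0`.
-/

theorem mul_const_mul_zpow_of_eq_add_one {K : Type*} [Field K] {r lam μ : K} (hr : r ≠ 0)
    (h : lam * r = μ) (C : K) {m n : ℤ} (hmn : m = n + 1) :
    lam * (C * r ^ m) = μ * (C * r ^ n) := by
  rw [hmn, zpow_add_one₀ hr, ← h]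
  ring

theorem three_state_diagonal_defect_amplitudes_are_eigenvector_general
    (σp σm : ℝ) (Δp Δm a b c d e f g h i : ℂ)
    (hΔp : ‖Δp‖ = 1) (hΔm : ‖Δm‖ = 1)
    (lam : ℂ) (hlam0 : lam ≠ 0)
    (α β γ : ℂ) (hγcond : lam * γ = d * α + e * γ + f * β)
    (ΨL ΨO ΨR : ℤ → ℂ)
    (hΨL0 : ΨL 0 = α) (hΨO0 : ΨO 0 = γ) (hΨR0 : ΨR 0 = β)
    (hΨLp : ∀ x : ℤ, 1 ≤ x →
      ΨL x = (lam * Complex.exp (-(Complex.I * (σp : ℂ)))) ^ x * α)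
    (hΨOp : ∀ x : ℤ, 1 ≤ x → ΨO x = 0)
    (hΨRp : ∀ x : ℤ, 1 ≤ x →
      ΨR x = lam⁻¹ * (g * α + h * γ + i * β) * (lam⁻¹ * Δp) ^ (x - 1))
    (hΨLm : ∀ x : ℤ, x ≤ -1 →
      ΨL x = lam⁻¹ * (a * α + b * γ + c * β)
              * (lam⁻¹ * Complex.exp (Complex.I * (σm : ℂ))) ^ (-x - 1))
    (hΨOm : ∀ x : ℤ, x ≤ -1 → ΨO x = 0)
    (hΨRm : ∀ x : ℤ, x ≤ -1 → ΨR x = (lam * Δm⁻¹) ^ (-x) * β) :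
    (∀ x : ℤ, 0 ≤ x →
      lam * ΨL x = Complex.exp (Complex.I * (σp : ℂ)) * ΨL (x + 1)) ∧
    (∀ x : ℤ, x ≤ -2 →
      lam * ΨL x = Complex.exp (Complex.I * (σm : ℂ)) * ΨL (x + 1)) ∧
    (lam * ΨL (-1) = a * ΨL 0 + b * ΨO 0 + c * ΨR 0) ∧
    (∀ x : ℤ, 1 ≤ x →
      lam * ΨO x = Complex.exp (-(Complex.I * (σp : ℂ))) * ΨO x) ∧
    (∀ x : ℤ, x ≤ -1 →
      lam * ΨO x = Complex.exp (-(Complex.I * (σm : ℂ))) * ΨO x) ∧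
    (lam * ΨO 0 = d * ΨL 0 + e * ΨO 0 + f * ΨR 0) ∧
    (∀ x : ℤ, 2 ≤ x → lam * ΨR x = Δp * ΨR (x - 1)) ∧
    (∀ x : ℤ, x ≤ 0 → lam * ΨR x = Δm * ΨR (x - 1)) ∧
    (lam * ΨR 1 = g * ΨL 0 + h * ΨO 0 + i * ΨR 0) := by
  have hΔp0 : Δp ≠ 0 := norm_ne_zero_iff.mp (hΔp ▸ one_ne_zero)
  have hΔm0 : Δm ≠ 0 := norm_ne_zero_iff.mp (hΔm ▸ one_ne_zero)
  have hσp : Complex.exp (Complex.I * σp) * (lam * Complex.exp (-(Complex.I * σp))) = lam := by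
    rw [mul_left_comm, ← Complex.exp_add, add_neg_cancel, Complex.exp_zero, mul_one]
  have hΨLnonneg : ∀ x : ℤ, 0 ≤ x → ΨL x = α * (lam * Complex.exp (-(Complex.I * σp))) ^ x :=
    fun x hx => hx.eq_or_lt.elim (fun hx => by simp [← hx, hΨL0])
      (fun hx => (hΨLp x hx).trans (mul_comm _ _))
  have hΨRnonpos : ∀ x : ℤ, x ≤ 0 → ΨR x = β * (lam * Δm⁻¹) ^ (-x) :=
    fun x hx => hx.eq_or_lt.elim (fun hx => by simp [hx, hΨR0])
      (fun hx => (hΨRm x (Int.le_sub_one_of_lt hx)).trans (mul_comm _ _))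
  refine ⟨fun x hx => ?_, fun x hx => ?_, ?_, fun x hx => by simp [hΨOp x hx],
    fun x hx => by simp [hΨOm x hx], by rw [hΨL0, hΨO0, hΨR0, hγcond], fun x hx => ?_,
    fun x hx => ?_, ?_⟩
  · rw [hΨLnonneg x hx, hΨLnonneg (x + 1) (by omega)]
    exact (mul_const_mul_zpow_of_eq_add_one (by simp [hlam0]) hσp α rfl).symm
  · rw [hΨLm x (by omega), hΨLm (x + 1) (by omega)]
    exact mul_const_mul_zpow_of_eq_add_one (by simp [hlam0]) (mul_inv_cancel_left₀ hlam0 _) _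
      (by ring)
  · rw [hΨLm (-1) le_rfl, hΨL0, hΨO0, hΨR0, neg_neg, sub_self, zpow_zero, mul_one,
      mul_inv_cancel_left₀ hlam0]
  · rw [hΨRp x (by omega), hΨRp (x - 1) (by omega)]
    exact mul_const_mul_zpow_of_eq_add_one (by simp [hlam0, hΔp0])
      (mul_inv_cancel_left₀ hlam0 _) _ (by ring)
  · rw [hΨRnonpos x hx, hΨRnonpos (x - 1) (by omega)]
    exact (mul_const_mul_zpow_of_eq_add_one (by simp [hlam0, hΔm0])
      (by rw [mul_left_comm, mul_inv_cancel₀ hΔm0, mul_one]) β (by ring)).symm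
  · rw [hΨRp 1 le_rfl, hΨL0, hΨO0, hΨR0, sub_self, zpow_zero, mul_one,
      mul_inv_cancel_left₀ hlam0]

/-- Conversely, the explicit formulas (with the consistency condition λγ = dα + eγ + fβ)
define an eigenvector of the 3-state diagonal QW with one defect. -/
theorem three_state_diagonal_defect_amplitudes_are_eigenvector
    (σp σm : ℝ) (Δp Δm a b c d e f g h i : ℂ)
    (hΔp : ‖Δp‖ = 1) (hΔm : ‖Δm‖ = 1)
    (hU0 : !![a, b, c; d, e, f; g, h, i] ∈ Matrix.unitaryGroup (Fin 3) ℂ)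
    (lam : ℂ) (hlam0 : lam ≠ 0)
    (α β γ : ℂ) (hγcond : lam * γ = d * α + e * γ + f * β)
    (ΨL ΨO ΨR : ℤ → ℂ)
    (hΨL0 : ΨL 0 = α) (hΨO0 : ΨO 0 = γ) (hΨR0 : ΨR 0 = β)
    (hΨLp : ∀ x : ℤ, 1 ≤ x →
      ΨL x = (lam * Complex.exp (-(Complex.I * (σp : ℂ)))) ^ x * α)
    (hΨOp : ∀ x : ℤ, 1 ≤ x → ΨO x = 0)
    (hΨRp : ∀ x : ℤ, 1 ≤ x →
      ΨR x = lam⁻¹ * (g * α + h * γ + i * β) * (lam⁻¹ * Δp) ^ (x - 1))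
    (hΨLm : ∀ x : ℤ, x ≤ -1 →
      ΨL x = lam⁻¹ * (a * α + b * γ + c * β)
              * (lam⁻¹ * Complex.exp (Complex.I * (σm : ℂ))) ^ (-x - 1))
    (hΨOm : ∀ x : ℤ, x ≤ -1 → ΨO x = 0)
    (hΨRm : ∀ x : ℤ, x ≤ -1 → ΨR x = (lam * Δm⁻¹) ^ (-x) * β) :
    (∀ x : ℤ, 0 ≤ x →
      lam * ΨL x = Complex.exp (Complex.I * (σp : ℂ)) * ΨL (x + 1)) ∧
    (∀ x : ℤ, x ≤ -2 →
      lam * ΨL x = Complex.exp (Complex.I * (σm : ℂ)) * ΨL (x + 1)) ∧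
    (lam * ΨL (-1) = a * ΨL 0 + b * ΨO 0 + c * ΨR 0) ∧
    (∀ x : ℤ, 1 ≤ x →
      lam * ΨO x = Complex.exp (-(Complex.I * (σp : ℂ))) * ΨO x) ∧
    (∀ x : ℤ, x ≤ -1 →
      lam * ΨO x = Complex.exp (-(Complex.I * (σm : ℂ))) * ΨO x) ∧
    (lam * ΨO 0 = d * ΨL 0 + e * ΨO 0 + f * ΨR 0) ∧
    (∀ x : ℤ, 2 ≤ x → lam * ΨR x = Δp * ΨR (x - 1)) ∧
    (∀ x : ℤ, x ≤ 0 → lam * ΨR x = Δm * ΨR (x - 1)) ∧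
    (lam * ΨR 1 = g * ΨL 0 + h * ΨO 0 + i * ΨR 0) :=
  three_state_diagonal_defect_amplitudes_are_eigenvector_general σp σm Δp Δm a b c d e f g h i hΔp
    hΔm lam hlam0 α β γ hγcond ΨL ΨO ΨR hΨL0 hΨO0 hΨR0 hΨLp hΨOp hΨRp hΨLm hΨOm hΨRm
end

section
/- Let λ ∈ ℂ with |λ| = 1, λ ≠ e^{−iσ₊}, λ ≠ e^{−iσ₋} and λ ≠ e (the middle diagonal entry of the defect coin), and suppose the defect coin U₀ = [[a,b,c],[d,e,f],[g,h,i]] is also diagonal, i.e., b = c = d = f = g = h = 0 (so |a| = |e| = |i| = 1). Then for any eigenvector Ψ^L, Ψ^O, Ψ^R : ℤ → ℂ of the 3-state diagonal quantum walk with one defect with eigenvalue λ, the measure μ(x) = |Ψ^L(x)|² + |Ψ^O(x)|² + |Ψ^R(x)|² is uniform: μ(x) = |Ψ^L(0)|² + |Ψ^R(0)|² for all x ∈ ℤ. -/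
/-!
Since the defect coin is diagonal, the three chiralities decouple. The middle component satisfies
`λ Ψ^O(x) = c(x) Ψ^O(x)` with `c(x) ∈ {e^{-iσ₊}, e, e^{-iσ₋}}`, all different from `λ`, so it
vanishes. The left and right components are transported one site per step with unimodular
multipliers (`e^{iσ±}`, `Δ±` and the unimodular diagonal entries `a`, `i` of the defect), and
`|λ| = 1`, so their moduli are constant in `x`.
-/

open Matrix in
theorem Matrix.norm_apply_eq_one_of_diagonal_mem_unitaryGroup {𝕜 n : Type*} [RCLike 𝕜]
    [Fintype n] [DecidableEq n] {v : n → 𝕜} (hv : diagonal v ∈ unitaryGroup n 𝕜) (j : n) :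
    ‖v j‖ = 1 := by
  have hvj : star (v j) * v j = 1 := by
    simpa [star_eq_conjTranspose, diagonal_conjTranspose] using congrFun (congrFun hv.1 j) j
  exact CStarRing.norm_of_mem_unitary (Unitary.mem_iff_star_mul_self.2 hvj)

theorem norm_eq_norm_zero_of_norm_add_one {E : Type*} [Norm E] {F : ℤ → E}
    (h : ∀ x, ‖F (x + 1)‖ = ‖F x‖) (x : ℤ) : ‖F x‖ = ‖F 0‖ := by
  simpa using Function.Periodic.int_mul_eq (c := 1) (f := fun x => ‖F x‖) h x

theorem eq_zero_of_forall_mul_eq_mul_of_ne {M : Type*} [MulZeroClass M] [IsRightCancelMulZero M]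
    {lam up um e : M} {F : ℤ → M} (hup : lam ≠ up) (hum : lam ≠ um) (he : lam ≠ e)
    (hpos : ∀ x, 1 ≤ x → lam * F x = up * F x) (hneg : ∀ x, x ≤ -1 → lam * F x = um * F x)
    (hzero : lam * F 0 = e * F 0) (x : ℤ) : F x = 0 := by
  rcases lt_trichotomy x 0 with hx | rfl | hx
  · exact (mul_eq_mul_right_iff.1 (hneg x (by omega))).resolve_left hum
  · exact (mul_eq_mul_right_iff.1 hzero).resolve_left he
  · exact (mul_eq_mul_right_iff.1 (hpos x (by omega))).resolve_left hup

section UnimodularTransport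

variable {𝕜 : Type*} [NormedDivisionRing 𝕜] {lam up um a : 𝕜} {F : ℤ → 𝕜}

theorem norm_eq_of_mul_eq_mul_of_norm_eq_one {z w : 𝕜} (hlam : ‖lam‖ = 1) (ha : ‖a‖ = 1)
    (h : lam * z = a * w) : ‖z‖ = ‖w‖ := by
  simpa [hlam, ha] using congrArg norm h

theorem norm_eq_norm_zero_of_unimodular_step_succ (hlam : ‖lam‖ = 1) (hup : ‖up‖ = 1)
    (hum : ‖um‖ = 1) (ha : ‖a‖ = 1)
    (hpos : ∀ x, 0 ≤ x → lam * F x = up * F (x + 1))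
    (hneg : ∀ x, x ≤ -2 → lam * F x = um * F (x + 1))
    (hdefect : lam * F (-1) = a * F 0) (x : ℤ) : ‖F x‖ = ‖F 0‖ := by
  refine norm_eq_norm_zero_of_norm_add_one (fun y => ?_) x
  rcases lt_trichotomy y (-1) with hy | rfl | hy
  · exact (norm_eq_of_mul_eq_mul_of_norm_eq_one hlam hum (hneg y (by omega))).symm
  · exact (norm_eq_of_mul_eq_mul_of_norm_eq_one hlam ha hdefect).symm
  · exact (norm_eq_of_mul_eq_mul_of_norm_eq_one hlam hup (hpos y (by omega))).symm

theorem norm_eq_norm_zero_of_unimodular_step_pred (hlam : ‖lam‖ = 1) (hup : ‖up‖ = 1)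
    (hum : ‖um‖ = 1) (ha : ‖a‖ = 1)
    (hpos : ∀ x, 2 ≤ x → lam * F x = up * F (x - 1))
    (hneg : ∀ x, x ≤ 0 → lam * F x = um * F (x - 1))
    (hdefect : lam * F 1 = a * F 0) (x : ℤ) : ‖F x‖ = ‖F 0‖ := by
  refine norm_eq_norm_zero_of_norm_add_one (fun y => ?_) x
  rcases lt_trichotomy y 0 with hy | rfl | hy
  · simpa using norm_eq_of_mul_eq_mul_of_norm_eq_one hlam hum (hneg (y + 1) (by omega))
  · simpa using norm_eq_of_mul_eq_mul_of_norm_eq_one hlam ha hdefect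
  · simpa using norm_eq_of_mul_eq_mul_of_norm_eq_one hlam hup (hpos (y + 1) (by omega))

end UnimodularTransport

/-- If the defect coin of the 3-state diagonal QW is itself diagonal and λ avoids
e^{−iσ₊}, e^{−iσ₋} and the middle diagonal entry e, the stationary measure is uniform. -/
theorem three_state_diagonal_defect_uniform_of_diagonal_defect
    (σp σm : ℝ) (Δp Δm a b c d e f g h i : ℂ)
    (hΔp : ‖Δp‖ = 1) (hΔm : ‖Δm‖ = 1)
    (hU0 : !![a, b, c; d, e, f; g, h, i] ∈ Matrix.unitaryGroup (Fin 3) ℂ)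
    (hb : b = 0) (hcz : c = 0) (hdz : d = 0) (hfz : f = 0) (hgz : g = 0) (hhz : h = 0)
    (lam : ℂ) (hlam : ‖lam‖ = 1)
    (hlamp : lam ≠ Complex.exp (-(Complex.I * (σp : ℂ))))
    (hlamm : lam ≠ Complex.exp (-(Complex.I * (σm : ℂ))))
    (hlame : lam ≠ e)
    (ΨL ΨO ΨR : ℤ → ℂ)
    (hL1 : ∀ x : ℤ, 0 ≤ x →
      lam * ΨL x = Complex.exp (Complex.I * (σp : ℂ)) * ΨL (x + 1))
    (hL2 : ∀ x : ℤ, x ≤ -2 →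
      lam * ΨL x = Complex.exp (Complex.I * (σm : ℂ)) * ΨL (x + 1))
    (hL3 : lam * ΨL (-1) = a * ΨL 0 + b * ΨO 0 + c * ΨR 0)
    (hO1 : ∀ x : ℤ, 1 ≤ x →
      lam * ΨO x = Complex.exp (-(Complex.I * (σp : ℂ))) * ΨO x)
    (hO2 : ∀ x : ℤ, x ≤ -1 →
      lam * ΨO x = Complex.exp (-(Complex.I * (σm : ℂ))) * ΨO x)
    (hO3 : lam * ΨO 0 = d * ΨL 0 + e * ΨO 0 + f * ΨR 0)
    (hR1 : ∀ x : ℤ, 2 ≤ x → lam * ΨR x = Δp * ΨR (x - 1))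
    (hR2 : ∀ x : ℤ, x ≤ 0 → lam * ΨR x = Δm * ΨR (x - 1))
    (hR3 : lam * ΨR 1 = g * ΨL 0 + h * ΨO 0 + i * ΨR 0)
    (μ : ℤ → ℝ)
    (hμ : ∀ x : ℤ, μ x = ‖ΨL x‖ ^ 2 + ‖ΨO x‖ ^ 2
                          + ‖ΨR x‖ ^ 2) :
    ∀ x : ℤ, μ x = ‖ΨL 0‖ ^ 2 + ‖ΨR 0‖ ^ 2 := by
  subst hb hcz hdz hfz hgz hhz
  have hdiag : !![a, 0, 0; 0, e, 0; 0, 0, i] = Matrix.diagonal ![a, e, i] := by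
    ext j k; fin_cases j <;> fin_cases k <;> rfl
  rw [hdiag] at hU0
  have hunit := Matrix.norm_apply_eq_one_of_diagonal_mem_unitaryGroup hU0
  have hexp (s : ℝ) : ‖Complex.exp (Complex.I * s)‖ = 1 := by
    rw [mul_comm]; exact Complex.norm_exp_ofReal_mul_I s
  have hO := eq_zero_of_forall_mul_eq_mul_of_ne hlamp hlamm hlame hO1 hO2 (by simpa using hO3)
  have hL := norm_eq_norm_zero_of_unimodular_step_succ hlam (hexp σp) (hexp σm)
    (hunit 0) hL1 hL2 (by simpa using hL3)
  have hR := norm_eq_norm_zero_of_unimodular_step_pred hlam hΔp hΔm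
    (hunit 2) hR1 hR2 (by simpa using hR3)
  intro x
  simp [hμ, hO, hL, hR]
end

section
/- Let λ ∈ ℂ with |λ| = 1 and λ ≠ e^{−iσ}, and let Ψ^L, Ψ^O, Ψ^R : ℤ → ℂ be an eigenvector of the 3-state homogeneous diagonal quantum walk with eigenvalue λ, with α = Ψ^L(0), β = Ψ^R(0). Then Ψ^O(x) = 0 for all x ∈ ℤ, the amplitudes are given explicitly by Ψ^L(x) = (λ·e^{−iσ})^x·α and Ψ^R(x) = (Δ·λ⁻¹)^x·β for all x ∈ ℤ, and consequently the measure μ(x) = |Ψ^L(x)|² + |Ψ^O(x)|² + |Ψ^R(x)|² is uniform: μ(x) = |α|² + |β|² for all x ∈ ℤ. -/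
/-! Each component of the eigenvalue equation is a first-order recurrence along ℤ with a
nonzero ratio, so it is geometric; the ratios `λ e^{-iσ}` and `Δ λ⁻¹` have modulus one, so the
moving components have constant modulus. The stationary component satisfies
`(λ - e^{-iσ}) Ψ^O = 0` and vanishes. -/

theorem zpow_smul_of_forall_add_one {K M : Type*} [Field K] [AddCommGroup M] [Module K M]
    {c : K} (hc : c ≠ 0) {f : ℤ → M} (hf : ∀ x, f (x + 1) = c • f x) (x : ℤ) :
    f x = c ^ x • f 0 := by
  induction x using Int.induction_on with
  | zero => simp
  | succ n ih => rw [hf, ih, smul_smul, zpow_add_one₀ hc, mul_comm]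
  | pred n ih =>
    have hstep : f (-n) = c • f (-n - 1) := by simpa using hf (-n - 1)
    rw [zpow_sub_one₀ hc, mul_comm, mul_smul, ← ih, hstep, smul_smul, inv_mul_cancel₀ hc,
      one_smul]

/-- For the 3-state homogeneous diagonal QW with λ ≠ e^{−iσ}, the non-moving component
of an eigenvector vanishes everywhere, the amplitudes are explicit geometric sequences,
and the stationary measure is uniform. -/
theorem three_state_homogeneous_diagonal_uniform
    (σ : ℝ) (Δ : ℂ) (hΔ : ‖Δ‖ = 1)
    (lam : ℂ) (hlam : ‖lam‖ = 1)
    (hlamσ : lam ≠ Complex.exp (-(Complex.I * (σ : ℂ))))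
    (ΨL ΨO ΨR : ℤ → ℂ)
    (hL : ∀ x : ℤ, lam * ΨL x = Complex.exp (Complex.I * (σ : ℂ)) * ΨL (x + 1))
    (hO : ∀ x : ℤ, lam * ΨO x = Complex.exp (-(Complex.I * (σ : ℂ))) * ΨO x)
    (hR : ∀ x : ℤ, lam * ΨR x = Δ * ΨR (x - 1))
    (α β : ℂ) (hα : α = ΨL 0) (hβ : β = ΨR 0)
    (μ : ℤ → ℝ)
    (hμ : ∀ x : ℤ, μ x = ‖ΨL x‖ ^ 2 + ‖ΨO x‖ ^ 2
                          + ‖ΨR x‖ ^ 2) :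
    (∀ x : ℤ, ΨO x = 0) ∧
    (∀ x : ℤ, ΨL x = (lam * Complex.exp (-(Complex.I * (σ : ℂ)))) ^ x * α) ∧
    (∀ x : ℤ, ΨR x = (Δ * lam⁻¹) ^ x * β) ∧
    (∀ x : ℤ, μ x = ‖α‖ ^ 2 + ‖β‖ ^ 2) := by
  have hlam0 : lam ≠ 0 := norm_ne_zero_iff.mp (by simp [hlam])
  have hΔ0 : Δ ≠ 0 := norm_ne_zero_iff.mp (by simp [hΔ])
  have hOz (x : ℤ) : ΨO x = 0 := (mul_eq_mul_right_iff.mp (hO x)).resolve_left hlamσ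
  have hLstep (x : ℤ) :
      ΨL (x + 1) = (lam * Complex.exp (-(Complex.I * σ))) • ΨL x := by
    rw [smul_eq_mul, Complex.exp_neg]
    field_simp
    linear_combination -hL x
  have hRstep (x : ℤ) : ΨR (x + 1) = (Δ * lam⁻¹) • ΨR x := by
    have h := hR (x + 1)
    rw [add_sub_cancel_right] at h
    rw [smul_eq_mul]
    field_simp
    linear_combination h
  have hLz (x : ℤ) : ΨL x = (lam * Complex.exp (-(Complex.I * σ))) ^ x * α :=
    hα ▸ zpow_smul_of_forall_add_one (mul_ne_zero hlam0 (Complex.exp_ne_zero _)) hLstep x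
  have hRz (x : ℤ) : ΨR x = (Δ * lam⁻¹) ^ x * β :=
    hβ ▸ zpow_smul_of_forall_add_one (mul_ne_zero hΔ0 (inv_ne_zero hlam0)) hRstep x
  refine ⟨hOz, hLz, hRz, fun x => ?_⟩
  simp [hμ, hLz, hRz, hOz, norm_zpow, hlam, hΔ, Complex.norm_exp]
end
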